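/- Let f₁, f₂, g₁, g₂ ∈ ℝ. On M define H₀(q,p) = |p|²/2 − 1/|q|, the generating functions G₁(q,p) = −g₁ (p·q) H₀(q,p) and G₂(q,p) = (p·q) · ( (1/2)(−g₁² + 2g₁f₁ − 2g₂) H₀(q,p)² + (g₁²/2) H₀(q,p)/|q| ), and the constants δ₁ = 2g₁ − f₁ and δ₂ = 5g₁² − 6g₁f₁ + 2g₂ + 2f₁² − f₂. Then the identity (2f₁² − f₂) H₀³ + (3f₁g₁ − g₂) H₀²/|q| + g₁² H₀/|q|² = δ₂ H₀³ + {G₂, H₀} + δ₁ {G₁, H₀²} + (1/2) {G₁, {G₁, H₀}} holds at every point of M. (This is the second-order step of the normal-form construction relating the implicitly defined Hamiltonians f(H) = |p|²/2 − g(H)/|q| to the Kepler problem.) -/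

import Mathlib

noncomputable section

/-- Squared Euclidean norm on `ℝ³`. -/
def normSq (v : Fin 3 → ℝ) : ℝ := ∑ i, v i ^ 2

/-- Euclidean norm on `ℝ³`. -/
def nrm (v : Fin 3 → ℝ) : ℝ := Real.sqrt (normSq v)

/-- Euclidean inner product `p·q`. -/
def dotP (p q : Fin 3 → ℝ) : ℝ := ∑ i, p i * q i

/-- Partial derivative `∂F/∂q^k` of a Hamiltonian function at `(q,p)`. -/
def pdQ (F : (Fin 3 → ℝ) → (Fin 3 → ℝ) → ℝ) (q p : Fin 3 → ℝ) (k : Fin 3) : ℝ :=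
  deriv (fun t => F (Function.update q k t) p) (q k)

/-- Partial derivative `∂F/∂p^k` of a Hamiltonian function at `(q,p)`. -/
def pdP (F : (Fin 3 → ℝ) → (Fin 3 → ℝ) → ℝ) (q p : Fin 3 → ℝ) (k : Fin 3) : ℝ :=
  deriv (fun t => F q (Function.update p k t)) (p k)

/-- The Hamiltonian vector field `X_F(q,p) = (∂F/∂p, −∂F/∂q)`. -/
def Xham (F : (Fin 3 → ℝ) → (Fin 3 → ℝ) → ℝ) (q p : Fin 3 → ℝ) :
    (Fin 3 → ℝ) × (Fin 3 → ℝ) :=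
  (fun k => pdP F q p k, fun k => -pdQ F q p k)


/-- The canonical Poisson bracket `{F,G} = Σ_k (∂F/∂q^k ∂G/∂p^k − ∂F/∂p^k ∂G/∂q^k)`. -/
def pbr (F G : (Fin 3 → ℝ) → (Fin 3 → ℝ) → ℝ) (q p : Fin 3 → ℝ) : ℝ :=
  ∑ k, (pdQ F q p k * pdP G q p k - pdP F q p k * pdQ G q p k)

/-- The Kepler Hamiltonian `H₀(q,p) = |p|²/2 − 1/|q|`. -/
def Hkep : (Fin 3 → ℝ) → (Fin 3 → ℝ) → ℝ := fun q p => normSq p / 2 - 1 / nrm q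

/-- The first generating function `G₁ = −g₁ (p·q) H₀`. -/
def Gen₁ (g₁ : ℝ) : (Fin 3 → ℝ) → (Fin 3 → ℝ) → ℝ :=
  fun q p => -g₁ * dotP p q * Hkep q p

/-- The second generating function
`G₂ = (p·q) ((1/2)(−g₁² + 2g₁f₁ − 2g₂) H₀² + (g₁²/2) H₀/|q|)`. -/
def Gen₂ (f₁ g₁ g₂ : ℝ) : (Fin 3 → ℝ) → (Fin 3 → ℝ) → ℝ :=
  fun q p => dotP p q *
    ((1 / 2) * (-g₁ ^ 2 + 2 * g₁ * f₁ - 2 * g₂) * (Hkep q p) ^ 2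
      + (g₁ ^ 2 / 2) * Hkep q p / nrm q)

lemma normSq_update (q : Fin 3 → ℝ) (k : Fin 3) (t : ℝ) :
    normSq (Function.update q k t) = normSq q - q k ^ 2 + t ^ 2 := by
  fin_cases k <;>
    simp [normSq, Fin.sum_univ_three, Function.update_apply] <;> ring

lemma dotP_update_right (p q : Fin 3 → ℝ) (k : Fin 3) (t : ℝ) :
    dotP p (Function.update q k t) = dotP p q - p k * q k + p k * t := by
  fin_cases k <;>
    simp [dotP, Fin.sum_univ_three, Function.update_apply] <;> ring

lemma dotP_update_left (p q : Fin 3 → ℝ) (k : Fin 3) (t : ℝ) :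
    dotP (Function.update p k t) q = dotP p q - p k * q k + q k * t := by
  fin_cases k <;>
    simp [dotP, Fin.sum_univ_three, Function.update_apply] <;> ring

lemma normSq_nonneg' (q : Fin 3 → ℝ) : 0 ≤ normSq q :=
  Finset.sum_nonneg fun _ _ => sq_nonneg _

lemma normSq_pos (q : Fin 3 → ℝ) (hq : q ≠ 0) : 0 < normSq q := by
  rcases Function.ne_iff.mp hq with ⟨i, hi⟩
  exact Finset.sum_pos' (fun j _ => sq_nonneg _)
    ⟨i, Finset.mem_univ i, by have : q i ≠ 0 := by simpa using hi
                              positivity⟩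

lemma nrm_pos (q : Fin 3 → ℝ) (hq : q ≠ 0) : 0 < nrm q :=
  Real.sqrt_pos.mpr (normSq_pos q hq)

lemma nrm_ne (q : Fin 3 → ℝ) (hq : q ≠ 0) : nrm q ≠ 0 := ne_of_gt (nrm_pos q hq)

lemma nrm_sq (q : Fin 3 → ℝ) : nrm q ^ 2 = normSq q := Real.sq_sqrt (normSq_nonneg' q)

lemma hd_normSq (q : Fin 3 → ℝ) (k : Fin 3) :
    HasDerivAt (fun t => normSq (Function.update q k t)) (2 * q k) (q k) := by
  have h : (fun t => normSq (Function.update q k t))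
      = fun t => normSq q - q k ^ 2 + t ^ 2 := funext (normSq_update q k)
  rw [h]
  simpa using (hasDerivAt_pow 2 (q k)).const_add (normSq q - q k ^ 2)

lemma hd_nrm (q : Fin 3 → ℝ) (hq : q ≠ 0) (k : Fin 3) :
    HasDerivAt (fun t => nrm (Function.update q k t)) (q k / nrm q) (q k) := by
  have h := (hd_normSq q k).sqrt (by
    rw [Function.update_eq_self]; exact ne_of_gt (normSq_pos q hq))
  rw [Function.update_eq_self] at h
  refine h.congr_deriv ?_
  rw [show Real.sqrt (normSq q) = nrm q from rfl]
  field_simp [nrm_ne q hq]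

lemma hd_inv_nrm (q : Fin 3 → ℝ) (hq : q ≠ 0) (k : Fin 3) :
    HasDerivAt (fun t => (nrm (Function.update q k t))⁻¹) (-(q k) / nrm q ^ 3) (q k) := by
  have h := (hd_nrm q hq k).inv (by
    rw [Function.update_eq_self]; exact nrm_ne q hq)
  rw [Function.update_eq_self] at h
  refine h.congr_deriv ?_
  field_simp

lemma hd_dotQ (q p : Fin 3 → ℝ) (k : Fin 3) :
    HasDerivAt (fun t => dotP p (Function.update q k t)) (p k) (q k) := by
  have h : (fun t => dotP p (Function.update q k t))
      = fun t => dotP p q - p k * q k + p k * t := funext (dotP_update_right p q k)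
  rw [h]
  simpa using ((hasDerivAt_id (q k)).const_mul (p k)).const_add (dotP p q - p k * q k)

lemma hd_dotP' (q p : Fin 3 → ℝ) (k : Fin 3) :
    HasDerivAt (fun t => dotP (Function.update p k t) q) (q k) (p k) := by
  have h : (fun t => dotP (Function.update p k t) q)
      = fun t => dotP p q - p k * q k + q k * t := funext (dotP_update_left p q k)
  rw [h]
  simpa using ((hasDerivAt_id (p k)).const_mul (q k)).const_add (dotP p q - p k * q k)

lemma hd_HkepQ (q p : Fin 3 → ℝ) (hq : q ≠ 0) (k : Fin 3) :
    HasDerivAt (fun t => Hkep (Function.update q k t) p) (q k / nrm q ^ 3) (q k) := by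
  have h : (fun t => Hkep (Function.update q k t) p)
      = fun t => normSq p / 2 - (nrm (Function.update q k t))⁻¹ := by
    funext t; simp [Hkep, one_div]
  rw [h]
  have := (hd_inv_nrm q hq k).const_sub (normSq p / 2)
  refine this.congr_deriv ?_
  ring

lemma hd_HkepP (q p : Fin 3 → ℝ) (k : Fin 3) :
    HasDerivAt (fun t => Hkep q (Function.update p k t)) (p k) (p k) := by
  have h : (fun t => Hkep q (Function.update p k t))
      = fun t => normSq (Function.update p k t) / 2 - 1 / nrm q := by
    funext t; rfl
  rw [h]
  have := ((hd_normSq p k).div_const 2).sub_const (1 / nrm q)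
  refine this.congr_deriv ?_
  ring

def Bfun (g₁ : ℝ) : (Fin 3 → ℝ) → (Fin 3 → ℝ) → ℝ :=
  fun q p => -g₁ * Hkep q p * (normSq p - (nrm q)⁻¹)

lemma pdQ_Hkep (q p : Fin 3 → ℝ) (hq : q ≠ 0) (k : Fin 3) :
    pdQ Hkep q p k = q k / nrm q ^ 3 :=
  (hd_HkepQ q p hq k).deriv

lemma pdP_Hkep (q p : Fin 3 → ℝ) (k : Fin 3) :
    pdP Hkep q p k = p k :=
  (hd_HkepP q p k).deriv

lemma pdQ_Gen₁ (g₁ : ℝ) (q p : Fin 3 → ℝ) (hq : q ≠ 0) (k : Fin 3) :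
    pdQ (Gen₁ g₁) q p k
      = -g₁ * (p k * Hkep q p + dotP p q * (q k / nrm q ^ 3)) := by
  have h := ((hd_dotQ q p k).const_mul (-g₁)).mul (hd_HkepQ q p hq k)
  simp only [Function.update_eq_self] at h
  unfold pdQ
  rw [show (fun t => Gen₁ g₁ (Function.update q k t) p)
      = (fun t => -g₁ * dotP p (Function.update q k t) * Hkep (Function.update q k t) p)
      from rfl]
  refine h.deriv.trans ?_; ring

lemma pdP_Gen₁ (g₁ : ℝ) (q p : Fin 3 → ℝ) (k : Fin 3) :
    pdP (Gen₁ g₁) q p k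
      = -g₁ * (q k * Hkep q p + dotP p q * p k) := by
  have h := ((hd_dotP' q p k).const_mul (-g₁)).mul (hd_HkepP q p k)
  simp only [Function.update_eq_self] at h
  unfold pdP
  rw [show (fun t => Gen₁ g₁ q (Function.update p k t))
      = (fun t => -g₁ * dotP (Function.update p k t) q * Hkep q (Function.update p k t))
      from rfl]
  refine h.deriv.trans ?_; ring

lemma pdQ_Hsq (q p : Fin 3 → ℝ) (hq : q ≠ 0) (k : Fin 3) :
    pdQ (fun q p => Hkep q p ^ 2) q p k = 2 * Hkep q p * (q k / nrm q ^ 3) := by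
  have h := (hd_HkepQ q p hq k).pow 2
  simp only [Function.update_eq_self] at h
  unfold pdQ
  refine h.deriv.trans ?_; push_cast; ring

lemma pdP_Hsq (q p : Fin 3 → ℝ) (k : Fin 3) :
    pdP (fun q p => Hkep q p ^ 2) q p k = 2 * Hkep q p * p k := by
  have h := (hd_HkepP q p k).pow 2
  simp only [Function.update_eq_self] at h
  unfold pdP
  refine h.deriv.trans ?_; push_cast; ring

lemma pdQ_Bfun (g₁ : ℝ) (q p : Fin 3 → ℝ) (hq : q ≠ 0) (k : Fin 3) :
    pdQ (Bfun g₁) q p k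
      = -g₁ * (q k / nrm q ^ 3) * (normSq p - (nrm q)⁻¹ + Hkep q p) := by
  have h := ((hd_HkepQ q p hq k).const_mul (-g₁)).mul
    ((hd_inv_nrm q hq k).const_sub (normSq p))
  simp only [Function.update_eq_self] at h
  unfold pdQ
  rw [show (fun t => Bfun g₁ (Function.update q k t) p)
      = (fun t => -g₁ * Hkep (Function.update q k t) p
          * (normSq p - (nrm (Function.update q k t))⁻¹)) from rfl]
  refine h.deriv.trans ?_; ring

lemma pdP_Bfun (g₁ : ℝ) (q p : Fin 3 → ℝ) (k : Fin 3) :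
    pdP (Bfun g₁) q p k
      = -g₁ * p k * (normSq p - (nrm q)⁻¹ + 2 * Hkep q p) := by
  have h := ((hd_HkepP q p k).const_mul (-g₁)).mul
    ((hd_normSq p k).sub_const ((nrm q)⁻¹))
  simp only [Function.update_eq_self] at h
  unfold pdP
  rw [show (fun t => Bfun g₁ q (Function.update p k t))
      = (fun t => -g₁ * Hkep q (Function.update p k t)
          * (normSq (Function.update p k t) - (nrm q)⁻¹)) from rfl]
  refine h.deriv.trans ?_; ring

lemma pdQ_Gen₂ (f₁ g₁ g₂ : ℝ) (q p : Fin 3 → ℝ) (hq : q ≠ 0) (k : Fin 3) :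
    pdQ (Gen₂ f₁ g₁ g₂) q p k
      = p k * ((1 / 2) * (-g₁ ^ 2 + 2 * g₁ * f₁ - 2 * g₂) * Hkep q p ^ 2
            + (g₁ ^ 2 / 2) * Hkep q p / nrm q)
        + dotP p q * (q k / nrm q ^ 3)
            * ((-g₁ ^ 2 + 2 * g₁ * f₁ - 2 * g₂) * Hkep q p
              + (g₁ ^ 2 / 2) * ((nrm q)⁻¹ - Hkep q p)) := by
  have hA := ((hd_HkepQ q p hq k).pow 2).const_mul
    ((1 / 2) * (-g₁ ^ 2 + 2 * g₁ * f₁ - 2 * g₂))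
  have hB := ((hd_HkepQ q p hq k).const_mul (g₁ ^ 2 / 2)).mul (hd_inv_nrm q hq k)
  have h := (hd_dotQ q p k).mul (hA.add hB)
  simp only [Function.update_eq_self] at h
  unfold pdQ
  rw [show (fun t => Gen₂ f₁ g₁ g₂ (Function.update q k t) p)
      = (fun t => dotP p (Function.update q k t) *
          ((1 / 2) * (-g₁ ^ 2 + 2 * g₁ * f₁ - 2 * g₂) * Hkep (Function.update q k t) p ^ 2
            + (g₁ ^ 2 / 2) * Hkep (Function.update q k t) p * (nrm (Function.update q k t))⁻¹))
      from by funext t; simp [Gen₂, div_eq_mul_inv]]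
  refine h.deriv.trans ?_
  simp only [Pi.add_apply, Pi.mul_apply, Pi.pow_apply, Function.update_eq_self]
  push_cast
  simp only [div_eq_mul_inv]
  ring

lemma pdP_Gen₂ (f₁ g₁ g₂ : ℝ) (q p : Fin 3 → ℝ) (hq : q ≠ 0) (k : Fin 3) :
    pdP (Gen₂ f₁ g₁ g₂) q p k
      = q k * ((1 / 2) * (-g₁ ^ 2 + 2 * g₁ * f₁ - 2 * g₂) * Hkep q p ^ 2
            + (g₁ ^ 2 / 2) * Hkep q p / nrm q)
        + dotP p q * p k
            * ((-g₁ ^ 2 + 2 * g₁ * f₁ - 2 * g₂) * Hkep q p + (g₁ ^ 2 / 2) / nrm q) := by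
  have hA := ((hd_HkepP q p k).pow 2).const_mul
    ((1 / 2) * (-g₁ ^ 2 + 2 * g₁ * f₁ - 2 * g₂))
  have hB := ((hd_HkepP q p k).const_mul (g₁ ^ 2 / 2)).div_const (nrm q)
  have h := (hd_dotP' q p k).mul (hA.add hB)
  simp only [Function.update_eq_self] at h
  unfold pdP
  rw [show (fun t => Gen₂ f₁ g₁ g₂ q (Function.update p k t))
      = (fun t => dotP (Function.update p k t) q *
          ((1 / 2) * (-g₁ ^ 2 + 2 * g₁ * f₁ - 2 * g₂) * Hkep q (Function.update p k t) ^ 2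
            + (g₁ ^ 2 / 2) * Hkep q (Function.update p k t) / nrm q))
      from rfl]
  refine h.deriv.trans ?_
  simp only [Pi.add_apply, Pi.mul_apply, Pi.pow_apply, Function.update_eq_self]
  push_cast
  field_simp

lemma sum3 (α β γ : ℝ) (q p : Fin 3 → ℝ) :
    (∑ k : Fin 3, (α * (p k * q k) + β * q k ^ 2 + γ * p k ^ 2))
      = α * dotP p q + β * normSq q + γ * normSq p := by
  simp only [dotP, normSq, Fin.sum_univ_three]; ring

lemma pbr_G1_H (g₁ : ℝ) (q p : Fin 3 → ℝ) (hq : q ≠ 0) :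
    pbr (Gen₁ g₁) Hkep q p = Bfun g₁ q p := by
  unfold pbr
  have key : ∀ k ∈ Finset.univ,
      pdQ (Gen₁ g₁) q p k * pdP Hkep q p k - pdP (Gen₁ g₁) q p k * pdQ Hkep q p k
        = (0 : ℝ) * (p k * q k) + (g₁ * Hkep q p / nrm q ^ 3) * q k ^ 2
            + (-(g₁ * Hkep q p)) * p k ^ 2 := fun k _ => by
    rw [pdQ_Gen₁ g₁ q p hq k, pdP_Gen₁ g₁ q p k, pdQ_Hkep q p hq k, pdP_Hkep q p k]
    ring
  rw [Finset.sum_congr rfl key, sum3, ← nrm_sq q]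
  unfold Bfun
  field_simp [nrm_ne q hq]
  ring

lemma pbr_G1_Hsq (g₁ : ℝ) (q p : Fin 3 → ℝ) (hq : q ≠ 0) :
    pbr (Gen₁ g₁) (fun q p => Hkep q p ^ 2) q p
      = -2 * g₁ * Hkep q p ^ 2 * (normSq p - (nrm q)⁻¹) := by
  unfold pbr
  have key : ∀ k ∈ Finset.univ,
      pdQ (Gen₁ g₁) q p k * pdP (fun q p => Hkep q p ^ 2) q p k
          - pdP (Gen₁ g₁) q p k * pdQ (fun q p => Hkep q p ^ 2) q p k
        = (0 : ℝ) * (p k * q k) + (2 * g₁ * Hkep q p ^ 2 / nrm q ^ 3) * q k ^ 2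
            + (-(2 * g₁ * Hkep q p ^ 2)) * p k ^ 2 := fun k _ => by
    rw [pdQ_Gen₁ g₁ q p hq k, pdP_Gen₁ g₁ q p k, pdQ_Hsq q p hq k, pdP_Hsq q p k]
    ring
  rw [Finset.sum_congr rfl key, sum3, ← nrm_sq q]
  field_simp [nrm_ne q hq]
  ring

lemma pbr_G1_Bfun (g₁ : ℝ) (q p : Fin 3 → ℝ) (hq : q ≠ 0) :
    pbr (Gen₁ g₁) (Bfun g₁) q p
      = g₁ ^ 2 * Hkep q p *
          (normSq p * (normSq p - (nrm q)⁻¹ + 2 * Hkep q p)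
            - (normSq p - (nrm q)⁻¹ + Hkep q p) / nrm q
            + dotP p q ^ 2 / nrm q ^ 3) := by
  unfold pbr
  have key : ∀ k ∈ Finset.univ,
      pdQ (Gen₁ g₁) q p k * pdP (Bfun g₁) q p k
          - pdP (Gen₁ g₁) q p k * pdQ (Bfun g₁) q p k
        = (g₁ ^ 2 * Hkep q p * dotP p q / nrm q ^ 3) * (p k * q k)
            + (-(g₁ ^ 2 * Hkep q p * (normSq p - (nrm q)⁻¹ + Hkep q p)) / nrm q ^ 3) * q k ^ 2
            + (g₁ ^ 2 * Hkep q p * (normSq p - (nrm q)⁻¹ + 2 * Hkep q p)) * p k ^ 2 :=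
      fun k _ => by
    rw [pdQ_Gen₁ g₁ q p hq k, pdP_Gen₁ g₁ q p k, pdQ_Bfun g₁ q p hq k, pdP_Bfun g₁ q p k]
    ring
  rw [Finset.sum_congr rfl key, sum3, ← nrm_sq q]
  field_simp [nrm_ne q hq]
  ring

lemma pbr_G2_H (f₁ g₁ g₂ : ℝ) (q p : Fin 3 → ℝ) (hq : q ≠ 0) :
    pbr (Gen₂ f₁ g₁ g₂) Hkep q p
      = ((1 / 2) * (-g₁ ^ 2 + 2 * g₁ * f₁ - 2 * g₂) * Hkep q p ^ 2
            + (g₁ ^ 2 / 2) * Hkep q p / nrm q) * (normSq p - (nrm q)⁻¹)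
        - (g₁ ^ 2 / 2) * Hkep q p * dotP p q ^ 2 / nrm q ^ 3 := by
  unfold pbr
  have key : ∀ k ∈ Finset.univ,
      pdQ (Gen₂ f₁ g₁ g₂) q p k * pdP Hkep q p k
          - pdP (Gen₂ f₁ g₁ g₂) q p k * pdQ Hkep q p k
        = (-(g₁ ^ 2 / 2) * Hkep q p * dotP p q / nrm q ^ 3) * (p k * q k)
            + (-((1 / 2) * (-g₁ ^ 2 + 2 * g₁ * f₁ - 2 * g₂) * Hkep q p ^ 2
                + (g₁ ^ 2 / 2) * Hkep q p / nrm q) / nrm q ^ 3) * q k ^ 2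
            + ((1 / 2) * (-g₁ ^ 2 + 2 * g₁ * f₁ - 2 * g₂) * Hkep q p ^ 2
                + (g₁ ^ 2 / 2) * Hkep q p / nrm q) * p k ^ 2 := fun k _ => by
    rw [pdQ_Gen₂ f₁ g₁ g₂ q p hq k, pdP_Gen₂ f₁ g₁ g₂ q p hq k,
      pdQ_Hkep q p hq k, pdP_Hkep q p k]
    ring
  rw [Finset.sum_congr rfl key, sum3, ← nrm_sq q]
  have hr := nrm_ne q hq
  clear key hq
  set r := nrm q
  set H := Hkep q p
  set d := dotP p q
  set s := normSq p
  field_simp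
  ring

lemma pdQ_inner (g₁ : ℝ) (q p : Fin 3 → ℝ) (hq : q ≠ 0) (k : Fin 3) :
    pdQ (fun q p => pbr (Gen₁ g₁) Hkep q p) q p k = pdQ (Bfun g₁) q p k := by
  unfold pdQ
  apply Filter.EventuallyEq.deriv_eq
  have hc : Continuous (fun t : ℝ => Function.update q k t) := by
    apply continuous_pi
    intro i
    by_cases h : i = k
    · subst h; simpa using continuous_id'
    · simp only [Function.update_of_ne h]; exact continuous_const
  have h0 : ∀ᶠ t in nhds (q k), Function.update q k t ≠ 0 :=
    hc.continuousAt.eventually_ne (by rw [Function.update_eq_self]; exact hq)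
  filter_upwards [h0] with t ht
  exact pbr_G1_H g₁ (Function.update q k t) p ht

lemma pdP_inner (g₁ : ℝ) (q p : Fin 3 → ℝ) (hq : q ≠ 0) (k : Fin 3) :
    pdP (fun q p => pbr (Gen₁ g₁) Hkep q p) q p k = pdP (Bfun g₁) q p k := by
  unfold pdP
  rw [funext fun t => pbr_G1_H g₁ q (Function.update p k t) hq]

lemma pbr_inner (g₁ : ℝ) (q p : Fin 3 → ℝ) (hq : q ≠ 0) :
    pbr (Gen₁ g₁) (fun q p => pbr (Gen₁ g₁) Hkep q p) q p
      = pbr (Gen₁ g₁) (Bfun g₁) q p := by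
  show (∑ k, (pdQ (Gen₁ g₁) q p k * pdP (fun q p => pbr (Gen₁ g₁) Hkep q p) q p k
      - pdP (Gen₁ g₁) q p k * pdQ (fun q p => pbr (Gen₁ g₁) Hkep q p) q p k))
    = ∑ k, (pdQ (Gen₁ g₁) q p k * pdP (Bfun g₁) q p k
      - pdP (Gen₁ g₁) q p k * pdQ (Bfun g₁) q p k)
  exact Finset.sum_congr rfl fun k _ => by
    rw [pdQ_inner g₁ q p hq k, pdP_inner g₁ q p hq k]

/-- second-order step of the normal-form construction. With `G₁, G₂` as above,
`δ₁ = 2g₁ − f₁` and `δ₂ = 5g₁² − 6g₁f₁ + 2g₂ + 2f₁² − f₂`, the identity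
`(2f₁² − f₂) H₀³ + (3f₁g₁ − g₂) H₀²/|q| + g₁² H₀/|q|²
  = δ₂ H₀³ + {G₂, H₀} + δ₁ {G₁, H₀²} + (1/2){G₁, {G₁, H₀}}`
holds at every point of `M = (ℝ³∖{0}) × ℝ³`. -/
theorem second_order_normal_form_step (f₁ f₂ g₁ g₂ : ℝ) :
    ∀ q p : Fin 3 → ℝ, q ≠ 0 →
      (2 * f₁ ^ 2 - f₂) * (Hkep q p) ^ 3
          + (3 * f₁ * g₁ - g₂) * (Hkep q p) ^ 2 / nrm q
          + g₁ ^ 2 * Hkep q p / (nrm q) ^ 2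
        = (5 * g₁ ^ 2 - 6 * g₁ * f₁ + 2 * g₂ + 2 * f₁ ^ 2 - f₂) * (Hkep q p) ^ 3
          + pbr (Gen₂ f₁ g₁ g₂) Hkep q p
          + (2 * g₁ - f₁) * pbr (Gen₁ g₁) (fun q p => (Hkep q p) ^ 2) q p
          + (1 / 2) * pbr (Gen₁ g₁) (fun q p => pbr (Gen₁ g₁) Hkep q p) q p := by
  intro q p hq
  rw [pbr_inner g₁ q p hq, pbr_G1_Bfun g₁ q p hq, pbr_G1_Hsq g₁ q p hq,
    pbr_G2_H f₁ g₁ g₂ q p hq]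
  have hr := nrm_ne q hq
  have hH : Hkep q p = normSq p / 2 - 1 / nrm q := rfl
  rw [hH]
  clear hq hH
  set r := nrm q
  set d := dotP p q
  set s := normSq p
  field_simp
  ring

end
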